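/- arXiv:1507.01063 — 2 statements merged into one kernel-verified Lean document; each statement's English description precedes it below -/
import Mathlib

section
/- The Gaussian measure of the annulus satisfies γ^m(A^m_ε) ≤ (e^{-ρ(m/2)}/√π) · e^{1/2} · (1 - 1/m)^{(m-1)/2} · 2ε√(m-1), where ρ is the function appearing in Stirling's approximation, satisfying 0 < ρ(x) < 1/(12x). -/
/-! Integrating in polar coordinates, `γ^m(A^m_ε)` is the integral of the radial density `g_m`
over an interval of length `2ε√(m-1)`. Bounding `g_m` by its maximum `g_m(√(m-1))` and
evaluating that maximum with Stirling's formula for `Γ(m/2)` gives the bound. -/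

open Real MeasureTheory

/-- The `m`-dimensional standard Gaussian measure on `ℝ^m`. -/
noncomputable def stdGaussian (m : ℕ) : Measure (EuclideanSpace ℝ (Fin m)) :=
  volume.withDensity
    (fun x => ENNReal.ofReal ((2 * Real.pi) ^ (-(m : ℝ) / 2) * Real.exp (-‖x‖ ^ 2 / 2)))

/-- The annulus `A^m_ε` around the sphere of radius `√(m-1)`. -/
def gaussAnnulus (m : ℕ) (ε : ℝ) : Set (EuclideanSpace ℝ (Fin m)) :=
  {x | (1 - ε) * Real.sqrt ((m : ℝ) - 1) < ‖x‖ ∧ ‖x‖ < (1 + ε) * Real.sqrt ((m : ℝ) - 1)}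

open Set

lemma mul_exp_neg_sq_div_two_le (x : ℝ) : x * exp (-x ^ 2 / 2) ≤ exp (-1 / 2) := by
  have h : x ≤ exp ((x ^ 2 - 1) / 2) := by
    nlinarith [add_one_le_exp ((x ^ 2 - 1) / 2), sq_nonneg (x - 1)]
  calc x * exp (-x ^ 2 / 2) ≤ exp ((x ^ 2 - 1) / 2) * exp (-x ^ 2 / 2) := by gcongr
    _ = exp (-1 / 2) := by rw [← exp_add]; ring_nf

lemma pow_mul_exp_neg_sq_div_two_le (n : ℕ) {r : ℝ} (hr : 0 ≤ r) :
    r ^ n * exp (-r ^ 2 / 2) ≤ √n ^ n * exp (-√n ^ 2 / 2) := by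
  rcases n.eq_zero_or_pos with rfl | hn
  · simpa using exp_le_one_iff.2 (by nlinarith [sq_nonneg r] : -r ^ 2 / 2 ≤ 0)
  have hs : 0 < √(n : ℝ) := sqrt_pos.2 (by exact_mod_cast hn)
  set x := r / √n
  have hrx : r = √n * x := (mul_div_cancel₀ r hs.ne').symm
  have hexp : exp (-r ^ 2 / 2) = exp (-x ^ 2 / 2) ^ n := by
    rw [← exp_nat_mul, hrx, mul_pow, sq_sqrt (Nat.cast_nonneg n)]; ring_nf
  calc r ^ n * exp (-r ^ 2 / 2) = √n ^ n * (x * exp (-x ^ 2 / 2)) ^ n := by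
        rw [hexp, hrx]; ring
    _ ≤ √n ^ n * exp (-1 / 2) ^ n := by
        gcongr
        exact mul_exp_neg_sq_div_two_le x
    _ = √n ^ n * exp (-√n ^ 2 / 2) := by
        rw [← exp_nat_mul, sq_sqrt (Nat.cast_nonneg n)]; ring_nf

/-- The paper's radial density `g_m`: the density of the chi distribution with `m` degrees of
freedom. -/
noncomputable def chiPDFReal (m : ℕ) (r : ℝ) : ℝ :=
  2 ^ (1 - (m : ℝ) / 2) / Gamma (m / 2) * (r ^ (m - 1) * exp (-r ^ 2 / 2))

lemma chiPDFReal_nonneg (m : ℕ) {r : ℝ} (hr : 0 ≤ r) : 0 ≤ chiPDFReal m r := by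
  unfold chiPDFReal
  positivity

lemma chiPDFReal_le_chiPDFReal_sqrt (m : ℕ) {r : ℝ} (hr : 0 ≤ r) :
    chiPDFReal m r ≤ chiPDFReal m √(m - 1 : ℕ) :=
  mul_le_mul_of_nonneg_left (pow_mul_exp_neg_sq_div_two_le _ hr) (by positivity)

lemma chiPDFReal_sqrt_eq_of_gamma_eq {m : ℕ} (hm : 1 < m) {c : ℝ}
    (hΓ : Gamma (m / 2) = √(2 * π / (m / 2)) * ((m / 2) / exp 1) ^ ((m : ℝ) / 2) * exp c) :
    chiPDFReal m √(m - 1 : ℕ) =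
      exp (-c) / √π * exp (1 / 2) * (1 - 1 / (m : ℝ)) ^ (((m : ℝ) - 1) / 2) := by
  have hm1 : 1 < (m : ℝ) := by exact_mod_cast hm
  have hq : 0 < (m : ℝ) - 1 := by linarith
  have hcast : ((m - 1 : ℕ) : ℝ) = m - 1 := by push_cast [hm.le]; ring
  have hsub : 1 - 1 / (m : ℝ) = (m - 1) / m := by field_simp
  apply log_injOn_pos
  · have := Gamma_pos_of_pos (by positivity : 0 < (m : ℝ) / 2)
    rw [mem_Ioi, chiPDFReal, hcast]
    positivity
  · rw [mem_Ioi, hsub]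
    positivity
  rw [chiPDFReal, hΓ, hcast, sq_sqrt hq.le, hsub]
  simp (disch := positivity) only [log_mul, log_div, log_rpow, log_exp, log_pow, log_sqrt, hcast]
  ring

lemma setIntegral_chiPDFReal_Ioo_le (m : ℕ) {a b : ℝ} (hab : a ≤ b) :
    ∫ r in Ioi 0 ∩ Ioo a b, chiPDFReal m r ≤ chiPDFReal m √(m - 1 : ℕ) * (b - a) := by
  have hvol : volume.real (Ioi 0 ∩ Ioo a b) ≤ b - a := by
    grw [measureReal_mono inter_subset_right measure_Ioo_lt_top.ne, Real.volume_real_Ioo_of_le hab]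
  calc ∫ r in Ioi 0 ∩ Ioo a b, chiPDFReal m r
      ≤ ‖∫ r in Ioi 0 ∩ Ioo a b, chiPDFReal m r‖ := le_norm_self _
    _ ≤ chiPDFReal m √(m - 1 : ℕ) * volume.real (Ioi 0 ∩ Ioo a b) := by
        refine norm_setIntegral_le_of_norm_le_const
          (measure_inter_lt_top_of_right_ne_top measure_Ioo_lt_top.ne) fun r hr => ?_
        rw [norm_of_nonneg (chiPDFReal_nonneg m hr.1.le)]
        exact chiPDFReal_le_chiPDFReal_sqrt m hr.1.le
    _ ≤ chiPDFReal m √(m - 1 : ℕ) * (b - a) :=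
        mul_le_mul_of_nonneg_left hvol (chiPDFReal_nonneg m (sqrt_nonneg _))

lemma integral_fun_norm_euclideanSpace {m : ℕ} (hm : 0 < m) (f : ℝ → ℝ) :
    ∫ x : EuclideanSpace ℝ (Fin m), f ‖x‖ =
      m * (√π ^ m / Gamma (m / 2 + 1)) * ∫ r in Ioi 0, r ^ (m - 1) * f r := by
  have : Nonempty (Fin m) := ⟨⟨0, hm⟩⟩
  rw [integral_fun_norm_addHaar, finrank_euclideanSpace_fin, measureReal_def,
    EuclideanSpace.volume_ball, ENNReal.ofReal_one, one_pow, one_mul, Fintype.card_fin,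
    ENNReal.toReal_ofReal (by positivity), nsmul_eq_mul, smul_eq_mul, mul_assoc]
  rfl

lemma gaussian_normalization_mul_ball_volume {m : ℕ} (hm : 0 < m) :
    m * (√π ^ m / Gamma (m / 2 + 1)) * (2 * π) ^ (-(m : ℝ) / 2) =
      2 ^ (1 - (m : ℝ) / 2) / Gamma (m / 2) := by
  have hm' : (m : ℝ) / 2 ≠ 0 := by positivity
  have hΓ : Gamma (m / 2) ≠ 0 := (Gamma_pos_of_pos (by positivity)).ne'
  have hπ : √π ^ m = π ^ ((m : ℝ) / 2) := by
    rw [← rpow_natCast, sqrt_eq_rpow, ← rpow_mul pi_pos.le]; ring_nf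
  rw [Gamma_add_one hm', hπ, neg_div, mul_rpow zero_le_two pi_pos.le, rpow_sub zero_lt_two,
    rpow_one, rpow_neg zero_le_two, rpow_neg pi_pos.le]
  field_simp

lemma stdGaussian_norm_preimage {m : ℕ} (hm : 0 < m) {S : Set ℝ} (hS : MeasurableSet S) :
    (stdGaussian m ((‖·‖) ⁻¹' S)).toReal = ∫ r in Ioi 0 ∩ S, chiPDFReal m r := by
  have hmeas : MeasurableSet ((‖·‖) ⁻¹' S : Set (EuclideanSpace ℝ (Fin m))) :=
    measurable_norm hS
  rw [stdGaussian, withDensity_apply _ hmeas, ← integral_eq_lintegral_of_nonneg_ae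
    (.of_forall fun x => by positivity) (by fun_prop : Continuous _).aestronglyMeasurable.restrict,
    ← integral_indicator hmeas]
  change ∫ x, S.indicator (fun r => (2 * π) ^ (-(m : ℝ) / 2) * exp (-r ^ 2 / 2)) ‖x‖ = _
  rw [integral_fun_norm_euclideanSpace hm, ← setIntegral_indicator hS, ← integral_const_mul]
  congr 1 with r
  by_cases hr : r ∈ S
  · simp only [indicator_of_mem hr, chiPDFReal, ← gaussian_normalization_mul_ball_volume hm]
    ring
  · simp only [indicator_of_notMem hr, mul_zero]

theorem gaussian_annulus_upper_bound_general (m : ℕ) (hm : 2 ≤ m) (ε : ℝ) (hε : 0 < ε)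
    (ρ : ℝ → ℝ)
    (hρ : ∀ x > (0 : ℝ),
      Real.Gamma x = Real.sqrt (2 * Real.pi / x) * (x / Real.exp 1) ^ x * Real.exp (ρ x)) :
    (stdGaussian m (gaussAnnulus m ε)).toReal ≤
      Real.exp (-ρ ((m : ℝ) / 2)) / Real.sqrt Real.pi * Real.exp (1 / 2) *
        (1 - 1 / (m : ℝ)) ^ (((m : ℝ) - 1) / 2) * (2 * ε * Real.sqrt ((m : ℝ) - 1)) := by
  have hab : (1 - ε) * √((m : ℝ) - 1) ≤ (1 + ε) * √((m : ℝ) - 1) := by gcongr; linarith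
  have hm1 : ((m - 1 : ℕ) : ℝ) = m - 1 := by push_cast [show 1 ≤ m by omega]; ring
  have hA : gaussAnnulus m ε =
      (‖·‖) ⁻¹' Ioo ((1 - ε) * √((m : ℝ) - 1)) ((1 + ε) * √((m : ℝ) - 1)) := rfl
  rw [hA, stdGaussian_norm_preimage (by omega) measurableSet_Ioo,
    ← chiPDFReal_sqrt_eq_of_gamma_eq (by omega) (hρ _ (by positivity))]
  grw [setIntegral_chiPDFReal_Ioo_le m hab, hm1]
  exact le_of_eq (by ring)

theorem gaussian_annulus_upper_bound (m : ℕ) (hm : 2 ≤ m) (ε : ℝ) (hε : 0 < ε)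
    (ρ : ℝ → ℝ)
    (hρ : ∀ x > (0 : ℝ),
      Real.Gamma x = Real.sqrt (2 * Real.pi / x) * (x / Real.exp 1) ^ x * Real.exp (ρ x))
    (hρ' : ∀ x > (0 : ℝ), ρ x ∈ Set.Ioo 0 (1 / (12 * x))) :
    (stdGaussian m (gaussAnnulus m ε)).toReal ≤
      Real.exp (-ρ ((m : ℝ) / 2)) / Real.sqrt Real.pi * Real.exp (1 / 2) *
        (1 - 1 / (m : ℝ)) ^ (((m : ℝ) - 1) / 2) * (2 * ε * Real.sqrt ((m : ℝ) - 1)) :=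
  gaussian_annulus_upper_bound_general m hm ε hε ρ hρ
end

section
/- Define c₀(δ) = 0 and c_l(δ) = (1 + δ·Σ_{m=0}^{l-1} c_m²) / √(1 - δ²·Σ_{m=0}^{l-1} c_m²) for l ≥ 1. Then for all l in the range where s_l(δ) < 1, one has δ²·Σ_{m=0}^{l} c_m(δ)² = s_l(δ), where s_l(δ) is defined by s₀ = 0 and s_{l+1} = s_l + (δ+s_l)²/(1-s_l). In particular the denominators are nonzero and the c_l are well-defined. -/
open Real Finset

/-- `φ_δ(s) = (δ+s)²/(1-s)`. -/
noncomputable def phiDelta (δ s : ℝ) : ℝ := (δ + s) ^ 2 / (1 - s)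

/-- The recursively defined sequence `s₀ = 0`, `s_{l+1} = s_l + φ_δ(s_l)`. -/
noncomputable def sSeq (δ : ℝ) : ℕ → ℝ
  | 0 => 0
  | l + 1 => sSeq δ l + phiDelta δ (sSeq δ l)

/-- Auxiliary sequence computing the pair `(c_l, Σ_{m=0}^{l} c_m²)`. -/
noncomputable def cAux (δ : ℝ) : ℕ → ℝ × ℝ
  | 0 => (0, 0)
  | l + 1 =>
    let S := (cAux δ l).2
    let c := (1 + δ * S) / Real.sqrt (1 - δ ^ 2 * S)
    (c, S + c ^ 2)

/-- The sequence `c₀ = 0`, `c_l = (1 + δ Σ_{m<l} c_m²)/√(1 - δ² Σ_{m<l} c_m²)`. -/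
noncomputable def cSeq (δ : ℝ) (l : ℕ) : ℝ := (cAux δ l).1

theorem sum_range_succ_cSeq_sq (δ : ℝ) (n : ℕ) :
    ∑ m ∈ range (n + 1), cSeq δ m ^ 2 = (cAux δ n).2 := by
  induction n with
  | zero => simp [cSeq, cAux]
  | succ k ih => rw [sum_range_succ, ih]; rfl

/-- The induction step: `δ + δ²S = δ (1 + δS)`, so `δ² c²` is `φ_δ` at `s = δ²S`. -/
theorem sq_mul_add_sq_div_sqrt_eq_add_phiDelta {δ S : ℝ} (h : δ ^ 2 * S < 1) :
    δ ^ 2 * (S + ((1 + δ * S) / √(1 - δ ^ 2 * S)) ^ 2) =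
      δ ^ 2 * S + phiDelta δ (δ ^ 2 * S) := by
  have hpos : 0 < 1 - δ ^ 2 * S := by linarith
  rw [phiDelta, div_pow, Real.sq_sqrt hpos.le]
  field_simp

theorem sq_mul_cAux_snd_eq_sSeq (δ : ℝ) {n : ℕ} (hs : ∀ m < n, sSeq δ m < 1) :
    δ ^ 2 * (cAux δ n).2 = sSeq δ n := by
  induction n with
  | zero => simp [cAux, sSeq]
  | succ k ih =>
    have hk : δ ^ 2 * (cAux δ k).2 = sSeq δ k := ih fun m hm => hs m (hm.trans k.lt_succ_self)
    have hlt : δ ^ 2 * (cAux δ k).2 < 1 := hk ▸ hs k k.lt_succ_self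
    calc δ ^ 2 * (cAux δ (k + 1)).2
        = δ ^ 2 * (cAux δ k).2 + phiDelta δ (δ ^ 2 * (cAux δ k).2) :=
          sq_mul_add_sq_div_sqrt_eq_add_phiDelta hlt
      _ = sSeq δ (k + 1) := by rw [hk, sSeq]

theorem sq_mul_sum_range_cSeq_sq (δ : ℝ) {n : ℕ} (hs : ∀ m < n, sSeq δ m < 1) :
    δ ^ 2 * ∑ m ∈ range (n + 1), cSeq δ m ^ 2 = sSeq δ n := by
  rw [sum_range_succ_cSeq_sq, sq_mul_cAux_snd_eq_sSeq δ hs]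

theorem cSeq_sum_eq_sSeq_general (δ : ℝ) (l : ℕ)
    (hs : ∀ m ≤ l, sSeq δ m < 1) :
    δ ^ 2 * ∑ m ∈ Finset.range (l + 1), cSeq δ m ^ 2 = sSeq δ l ∧
      ∀ m ≤ l, 0 < 1 - δ ^ 2 * ∑ k ∈ Finset.range m, cSeq δ k ^ 2 := by
  refine ⟨sq_mul_sum_range_cSeq_sq δ fun m hm => hs m hm.le, fun m hm => ?_⟩
  cases m with
  | zero => simp
  | succ k =>
    rw [sq_mul_sum_range_cSeq_sq δ fun j hj => hs j (by omega)]
    linarith [hs k (by omega)]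

theorem cSeq_sum_eq_sSeq (δ : ℝ) (hδ : 0 < δ) (l : ℕ)
    (hs : ∀ m ≤ l, sSeq δ m < 1) :
    δ ^ 2 * ∑ m ∈ Finset.range (l + 1), cSeq δ m ^ 2 = sSeq δ l ∧
      ∀ m ≤ l, 0 < 1 - δ ^ 2 * ∑ k ∈ Finset.range m, cSeq δ k ^ 2 :=
  cSeq_sum_eq_sSeq_general δ l hs
end
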